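/- Let {(x^t, y^t, z^t)} be generated by the proximal AMA, suppose assumption A1 holds, and suppose β>0, T ⪰ 0 and γ>0 are chosen so that (i) Σ_g + T + βB*B ≻ 0 and (ii) for some positive μ, δ, σ one has 2Σ_f − (β+μ)A*A ⪰ δI and γ + σ ≤ 1 + min{β,μ}/(2β). Let (x̄, ȳ, z̄) be the limit of {(x^t, y^t, z^t)} and define (x̄^N, ȳ^N) = (1/N)Σ_{t=1}^N (x^t, y^t). Then f(x̄^N) + g(ȳ^N) − f(x̄) − g(ȳ) ≥ −(‖z̄‖/√(Nσβ)) · √((1/(γβ))‖z⁰ − z̄‖² + ‖y⁰ − ȳ‖²_T). -/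

import Mathlib

open RealInnerProductSpace Filter Topology

/-- `v` is a subgradient of the extended-real-valued function `f` at `x`. -/
def IsSubgradAt {E : Type*} [NormedAddCommGroup E] [InnerProductSpace ℝ E]
    (f : E → EReal) (v x : E) : Prop :=
  ∀ u, f x + ((⟪v, u - x⟫ : ℝ) : EReal) ≤ f u

/-!
The optimality conditions of the two subproblems say that `A* zᵗ ∈ ∂f(xᵗ⁺¹)` and
`B* zᵗ - β B* rᵗ⁺¹ - T (yᵗ⁺¹ - yᵗ) ∈ ∂g(yᵗ⁺¹)`, where `rᵗ = A xᵗ + B yᵗ - c` is the residual.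
Comparing them with `A* z̄ ∈ ∂f(x̄)` and `B* z̄ ∈ ∂g(ȳ)` through the strong monotonicity of the
subdifferentials, and absorbing the cross term `⟪rᵗ⁺¹, A (xᵗ⁺¹ - x̄)⟫` by Young's inequality
(this is where condition (ii) enters), shows that `Vₜ = ‖zᵗ - z̄‖² / (γβ) + ‖yᵗ - ȳ‖²_T`
decreases by at least `σβ ‖rᵗ⁺¹‖²` in each step. Summing, and using the convexity of `‖·‖²`,
the residual `r̄ᴺ` of the ergodic averages satisfies `‖r̄ᴺ‖² ≤ V₀ / (Nσβ)`. Finally, since `z̄`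
is a Lagrange multiplier, `f(x̄ᴺ) + g(ȳᴺ) - f(x̄) - g(ȳ) ≥ ⟪z̄, r̄ᴺ⟫ ≥ -‖z̄‖ ‖r̄ᴺ‖`.
-/

namespace EReal

lemma add_coe_sub_le {a b : EReal} {r s : ℝ} (h : a + r ≤ b + s) :
    a + ((r - s : ℝ) : EReal) ≤ b :=
  calc a + ((r - s : ℝ) : EReal) = a + r + ((-s : ℝ) : EReal) := by
        rw [sub_eq_add_neg, EReal.coe_add, add_assoc]
    _ ≤ b + s + ((-s : ℝ) : EReal) := by gcongr
    _ = b := by rw [add_assoc, ← EReal.coe_add, add_neg_cancel, EReal.coe_zero, add_zero]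

lemma le_add_coe_of_add_coe_le {a b : EReal} {p K : ℝ} (h : a + p ≤ b) (hp : -K ≤ p) :
    a ≤ b + K :=
  calc a = a + ((-K : ℝ) : EReal) + K := by
        rw [add_assoc, ← EReal.coe_add, neg_add_cancel, EReal.coe_zero, add_zero]
    _ ≤ a + p + K := by gcongr
    _ ≤ b + K := by gcongr

end EReal

section Subgradient

variable {E : Type*} [NormedAddCommGroup E] [InnerProductSpace ℝ E]

lemma isSubgradAt_of_forall_add_neg_inner_le {f : E → EReal} {v x₀ : E}
    (hmin : ∀ u, f x₀ + ((-⟪v, x₀⟫ : ℝ) : EReal) ≤ f u + ((-⟪v, u⟫ : ℝ) : EReal)) :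
    IsSubgradAt f v x₀ := by
  intro u
  have h := EReal.add_coe_sub_le (hmin u)
  rwa [show -⟪v, x₀⟫ - -⟪v, u⟫ = ⟪v, u - x₀⟫ by rw [inner_sub_right]; ring] at h

/-- `hh` says that `G` is the gradient of `h` at `x₀`, in the weak form of a quadratic upper bound
along rays. -/
lemma isSubgradAt_neg_of_forall_add_le {g : E → EReal} {h : E → ℝ} {x₀ G : E}
    (hg_ne_bot : ∀ x, g x ≠ ⊥)
    (hg_cvx : ∀ (x₁ x₂ : E) (a b : ℝ), 0 ≤ a → 0 ≤ b → a + b = 1 →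
      g (a • x₁ + b • x₂) ≤ (a : EReal) * g x₁ + (b : EReal) * g x₂)
    (hmin : ∀ u, g x₀ + (h x₀ : EReal) ≤ g u + (h u : EReal))
    (hh : ∀ d, ∃ K, ∀ t : ℝ, 0 < t → t ≤ 1 → h (x₀ + t • d) ≤ h x₀ + t * ⟪G, d⟫ + t ^ 2 * K) :
    IsSubgradAt g (-G) x₀ := by
  intro u
  rcases eq_or_ne (g u) ⊤ with hu | hu
  · simp [hu]
  lift g u to ℝ using ⟨hu, hg_ne_bot u⟩ with U hU
  have hx₀ : g x₀ ≠ ⊤ := fun htop => by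
    have hmin_u := hmin u
    rw [htop, EReal.top_add_coe, ← hU, ← EReal.coe_add, top_le_iff] at hmin_u
    exact EReal.coe_ne_top _ hmin_u
  lift g x₀ to ℝ using ⟨hx₀, hg_ne_bot x₀⟩ with G₀ hG₀
  obtain ⟨K, hK⟩ := hh (u - x₀)
  have hray : ∀ t : ℝ, 0 < t → t ≤ 1 → G₀ - U - ⟪G, u - x₀⟫ ≤ t * K := by
    intro t ht₀ ht₁
    have hconv := hg_cvx x₀ u (1 - t) t (by linarith) ht₀.le (by ring)
    rw [← hG₀, ← hU, show (1 - t) • x₀ + t • u = x₀ + t • (u - x₀) by module] at hconv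
    have hcomb : (G₀ : EReal) + (h x₀ : EReal)
        ≤ ((1 - t : ℝ) : EReal) * G₀ + (t : EReal) * U + (h (x₀ + t • (u - x₀)) : EReal) :=
      (hmin _).trans (by gcongr)
    norm_cast at hcomb
    have hscaled : t * (G₀ - U - ⟪G, u - x₀⟫) ≤ t * (t * K) := by nlinarith [hK t ht₀ ht₁]
    exact le_of_mul_le_mul_left hscaled ht₀
  have hlim : Tendsto (fun t : ℝ => t * K) (𝓝[>] 0) (𝓝 0) := by
    simpa using ((continuous_mul_const K).tendsto 0).mono_left nhdsWithin_le_nhds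
  have hle := ge_of_tendsto hlim <| by
    filter_upwards [Ioc_mem_nhdsGT one_pos] with t ht using hray t ht.1 ht.2
  rw [inner_neg_left, ← EReal.coe_add, EReal.coe_le_coe_iff]
  linarith

end Subgradient

section ProxStep

variable {Y Z : Type*} [NormedAddCommGroup Y] [InnerProductSpace ℝ Y] [CompleteSpace Y]
  [NormedAddCommGroup Z] [InnerProductSpace ℝ Z] [CompleteSpace Z]

/-- The smooth part of the `y`-subproblem of the proximal AMA, with `a` standing for `A xᵗ⁺¹`. -/
noncomputable def proxObjective (B : Y →L[ℝ] Z) (T : Y →L[ℝ] Y) (β : ℝ) (z a c : Z) (y₀ y : Y) :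
    ℝ :=
  -⟪z, B y⟫ + β / 2 * ‖a + B y - c‖ ^ 2 + 1 / 2 * ⟪y - y₀, T (y - y₀)⟫

lemma proxObjective_add_smul {B : Y →L[ℝ] Z} {T : Y →L[ℝ] Y} (hT : T.IsSymmetric) (β : ℝ)
    (z a c : Z) (y₀ y d : Y) (t : ℝ) :
    proxObjective B T β z a c y₀ (y + t • d) = proxObjective B T β z a c y₀ y
      + t * ⟪-B.adjoint z + β • B.adjoint (a + B y - c) + T (y - y₀), d⟫
      + t ^ 2 * (β / 2 * ‖B d‖ ^ 2 + 1 / 2 * ⟪d, T d⟫) := by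
  have hres : a + B (y + t • d) - c = (a + B y - c) + t • B d := by
    rw [map_add, map_smul]; abel
  have hprox : y + t • d - y₀ = (y - y₀) + t • d := by abel
  have hsymm : ⟪y - y₀, T d⟫ = ⟪T (y - y₀), d⟫ := (hT _ _).symm
  unfold proxObjective
  rw [hres, hprox, norm_add_sq_real, norm_smul, Real.norm_eq_abs, mul_pow, sq_abs]
  simp only [map_add, map_smul, inner_add_left, inner_add_right, real_inner_smul_left,
    real_inner_smul_right, inner_neg_left, ContinuousLinearMap.adjoint_inner_left,
    real_inner_comm d (T (y - y₀)), hsymm]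
  ring

lemma isSubgradAt_of_proxObjective_min {g : Y → EReal} {B : Y →L[ℝ] Z} {T : Y →L[ℝ] Y}
    {β : ℝ} {z a c : Z} {y₀ y₁ : Y}
    (hg_ne_bot : ∀ y, g y ≠ ⊥)
    (hg_cvx : ∀ (y₁ y₂ : Y) (a b : ℝ), 0 ≤ a → 0 ≤ b → a + b = 1 →
      g (a • y₁ + b • y₂) ≤ (a : EReal) * g y₁ + (b : EReal) * g y₂)
    (hT : T.IsSymmetric)
    (hmin : ∀ y, g y₁ + (proxObjective B T β z a c y₀ y₁ : EReal)
      ≤ g y + (proxObjective B T β z a c y₀ y : EReal)) :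
    IsSubgradAt g (B.adjoint z - β • B.adjoint (a + B y₁ - c) - T (y₁ - y₀)) y₁ := by
  have h := isSubgradAt_neg_of_forall_add_le hg_ne_bot hg_cvx hmin fun d =>
    ⟨_, fun t _ _ => (proxObjective_add_smul hT β z a c y₀ y₁ d t).le⟩
  rwa [neg_add, neg_add, neg_neg, ← sub_eq_add_neg, ← sub_eq_add_neg] at h

end ProxStep

noncomputable def amaLyapunov {Y Z : Type*} [NormedAddCommGroup Y] [InnerProductSpace ℝ Y]
    [NormedAddCommGroup Z] (T : Y →L[ℝ] Y) (γ β : ℝ) (zb : Z) (yb : Y) (z : Z) (y : Y) : ℝ :=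
  1 / (γ * β) * ‖z - zb‖ ^ 2 + ⟪y - yb, T (y - yb)⟫

lemma amaLyapunov_nonneg {Y Z : Type*} [NormedAddCommGroup Y] [InnerProductSpace ℝ Y]
    [NormedAddCommGroup Z] {T : Y →L[ℝ] Y} (hT : T.IsPositive) {γ β : ℝ} (hγ : 0 < γ)
    (hβ : 0 < β) (zb : Z) (yb : Y) (z : Z) (y : Y) : 0 ≤ amaLyapunov T γ β zb yb z y :=
  add_nonneg (by positivity) (hT.re_inner_nonneg_right _)

section Lyapunov

variable {X Y Z : Type*}
  [NormedAddCommGroup X] [InnerProductSpace ℝ X]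
  [NormedAddCommGroup Y] [InnerProductSpace ℝ Y]
  [NormedAddCommGroup Z] [InnerProductSpace ℝ Z]

lemma two_mul_inner_le_of_sq_le_mul {P Q β : ℝ} (hP : 0 < P) (hβ : 0 ≤ β) (hPQ : β ^ 2 ≤ P * Q)
    (r a : Z) : 2 * β * ⟪r, a⟫ ≤ P * ‖a‖ ^ 2 + Q * ‖r‖ ^ 2 := by
  have hcs : β * ⟪r, a⟫ ≤ β * (‖r‖ * ‖a‖) := mul_le_mul_of_nonneg_left (real_inner_le_norm r a) hβ
  have hscaled : P * (2 * β * (‖r‖ * ‖a‖)) ≤ P * (P * ‖a‖ ^ 2 + Q * ‖r‖ ^ 2) := by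
    nlinarith [sq_nonneg (P * ‖a‖ - β * ‖r‖), mul_nonneg (sub_nonneg.2 hPQ) (sq_nonneg ‖r‖)]
  linarith [le_of_mul_le_mul_left hscaled hP]

lemma sq_le_add_mul_sub_min_div_two {β μ : ℝ} (hβ : 0 < β) (hμ : 0 ≤ μ) :
    β ^ 2 ≤ (β + μ) * (β - min β μ / 2) := by
  rcases min_cases β μ with ⟨h, hle⟩ | ⟨h, hlt⟩ <;> rw [h] <;> nlinarith

lemma inner_map_self_sub_inner_map_self_le {T : Y →L[ℝ] Y} (hT : T.IsPositive) (p q : Y) :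
    ⟪p, T p⟫ - ⟪q, T q⟫ ≤ 2 * ⟪T (p - q), p⟫ := by
  have hpq := hT.re_inner_nonneg_right (p - q)
  have hsymm : ⟪q, T p⟫ = ⟪p, T q⟫ := by rw [← hT.inner_left_eq_inner_right, real_inner_comm]
  simp only [RCLike.re_to_real, map_sub, inner_sub_left, inner_sub_right,
    hT.inner_left_eq_inner_right] at hpq ⊢
  linarith

/-- `u`, `r`, `a`, `p`, `q` stand for `zᵗ - z̄`, `rᵗ⁺¹`, `A (xᵗ⁺¹ - x̄)`, `yᵗ⁺¹ - ȳ`, `yᵗ - ȳ`. -/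
lemma mul_sq_norm_le_of_inner_bounds {T : Y →L[ℝ] Y} (hT : T.IsPositive) {β γ μ σ : ℝ}
    (hβ : 0 < β) (hγ : 0 < γ) (hμ : 0 ≤ μ) (hparam : γ + σ ≤ 1 + min β μ / (2 * β))
    {u r a : Z} {p q : Y}
    (hfx : (β + μ) * ‖a‖ ^ 2 ≤ 2 * ⟪u, a⟫) (hgy : ⟪T (p - q), p⟫ ≤ ⟪u - β • r, r - a⟫) :
    σ * β * ‖r‖ ^ 2 ≤ amaLyapunov T γ β 0 0 u q
      - amaLyapunov T γ β 0 0 (u - (γ * β) • r) p := by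
  set m := min β μ
  have hm : m ≤ β := min_le_left β μ
  have hdual : 1 / (γ * β) * ‖u‖ ^ 2 - 1 / (γ * β) * ‖u - (γ * β) • r‖ ^ 2
      = 2 * ⟪u, r⟫ - γ * β * ‖r‖ ^ 2 := by
    rw [norm_sub_sq_real, norm_smul, real_inner_smul_right, Real.norm_eq_abs,
      abs_of_pos (by positivity)]
    field_simp
    ring
  have hprimal := inner_map_self_sub_inner_map_self_le hT p q
  have hyoung := two_mul_inner_le_of_sq_le_mul (by positivity) hβ.le
    (sq_le_add_mul_sub_min_div_two hβ hμ) r a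
  have hσ : σ * β * ‖r‖ ^ 2 ≤ ((1 - γ) * β + m / 2) * ‖r‖ ^ 2 := by
    refine mul_le_mul_of_nonneg_right ?_ (sq_nonneg _)
    have hparam' := mul_le_mul_of_nonneg_right hparam (by positivity : (0 : ℝ) ≤ 2 * β)
    field_simp at hparam'
    linarith
  simp only [inner_sub_left, inner_sub_right, real_inner_smul_left,
    real_inner_self_eq_norm_sq] at hgy
  simp only [amaLyapunov, sub_zero]
  linarith

lemma amaLyapunov_step [CompleteSpace X] [CompleteSpace Y] [CompleteSpace Z]
    {A : X →L[ℝ] Z} {B : Y →L[ℝ] Z} {c : Z} {Sf : X →L[ℝ] X} {Sg T : Y →L[ℝ] Y} (hT : T.IsPositive) (hSg : ∀ w, 0 ≤ ⟪w, Sg w⟫)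
    {β γ μ σ : ℝ} (hβ : 0 < β) (hγ : 0 < γ) (hμ : 0 ≤ μ)
    (hSf : ∀ w, (β + μ) * ‖A w‖ ^ 2 ≤ 2 * ⟪w, Sf w⟫)
    (hparam : γ + σ ≤ 1 + min β μ / (2 * β))
    {xb x₁ : X} {yb y₀ y₁ : Y} {zb z₀ z₁ : Z}
    (hfx : ⟪x₁ - xb, Sf (x₁ - xb)⟫ ≤ ⟪A.adjoint z₀ - A.adjoint zb, x₁ - xb⟫)
    (hgy : ⟪y₁ - yb, Sg (y₁ - yb)⟫ ≤ ⟪(B.adjoint z₀ - β • B.adjoint (A x₁ + B y₁ - c)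
      - T (y₁ - y₀)) - B.adjoint zb, y₁ - yb⟫)
    (hc : A xb + B yb - c = 0) (hz : z₁ = z₀ - (γ * β) • (A x₁ + B y₁ - c)) :
    σ * β * ‖A x₁ + B y₁ - c‖ ^ 2
      ≤ amaLyapunov T γ β zb yb z₀ y₀ - amaLyapunov T γ β zb yb z₁ y₁ := by
  have hres : A x₁ + B y₁ - c - A (x₁ - xb) = B (y₁ - yb) :=
    calc A x₁ + B y₁ - c - A (x₁ - xb) = B (y₁ - yb) + (A xb + B yb - c) := by
          simp only [map_sub]; abel
      _ = B (y₁ - yb) := by rw [hc, add_zero]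
  have hfx' : (β + μ) * ‖A (x₁ - xb)‖ ^ 2 ≤ 2 * ⟪z₀ - zb, A (x₁ - xb)⟫ := by
    rw [← map_sub] at hfx
    rw [← ContinuousLinearMap.adjoint_inner_left]
    linarith [hSf (x₁ - xb)]
  have hgy' : ⟪T ((y₁ - yb) - (y₀ - yb)), y₁ - yb⟫
      ≤ ⟪(z₀ - zb) - β • (A x₁ + B y₁ - c), A x₁ + B y₁ - c - A (x₁ - xb)⟫ := by
    have h := (hSg _).trans hgy
    rw [hres, sub_sub_sub_cancel_right]
    simp only [inner_sub_left, real_inner_smul_left,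
      ContinuousLinearMap.adjoint_inner_left] at h ⊢
    linarith
  have key := mul_sq_norm_le_of_inner_bounds hT hβ hγ hμ hparam hfx' hgy'
  simp only [amaLyapunov, sub_zero] at key ⊢
  rwa [hz, sub_right_comm]

end Lyapunov

lemma sum_Icc_le_sub_of_le_sub_succ {a V : ℕ → ℝ} (h : ∀ t, a (t + 1) ≤ V t - V (t + 1))
    (N : ℕ) : ∑ t ∈ Finset.Icc 1 N, a t ≤ V 0 - V N := by
  induction N with
  | zero => simp
  | succ n ih =>
    rw [Finset.sum_Icc_succ_top (by omega)]
    linarith [h n]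

section Averages

variable {E : Type*} [NormedAddCommGroup E] [InnerProductSpace ℝ E]

lemma sq_norm_inv_card_smul_sum_le {ι : Type*} (s : Finset ι) (v : ι → E) :
    ‖(s.card : ℝ)⁻¹ • ∑ i ∈ s, v i‖ ^ 2 ≤ (s.card : ℝ)⁻¹ * ∑ i ∈ s, ‖v i‖ ^ 2 := by
  rcases s.eq_empty_or_nonempty with rfl | hs
  · simp
  have hcard : (0 : ℝ) < s.card := by exact_mod_cast hs.card_pos
  calc ‖(s.card : ℝ)⁻¹ • ∑ i ∈ s, v i‖ ^ 2
      ≤ ((s.card : ℝ)⁻¹ * ∑ i ∈ s, ‖v i‖) ^ 2 := by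
        rw [norm_smul, Real.norm_eq_abs, abs_of_pos (inv_pos.2 hcard)]
        gcongr
        exact norm_sum_le _ _
    _ ≤ ((s.card : ℝ)⁻¹) ^ 2 * (s.card * ∑ i ∈ s, ‖v i‖ ^ 2) := by
        rw [mul_pow]
        gcongr
        exact sq_sum_le_card_mul_sum_sq
    _ = (s.card : ℝ)⁻¹ * ∑ i ∈ s, ‖v i‖ ^ 2 := by
        field_simp

lemma sq_norm_inv_card_smul_sum_le_div {ι : Type*} {s : Finset ι} (hs : s.Nonempty) {κ V : ℝ}
    (hκ : 0 < κ) {v : ι → E} (hsum : ∑ i ∈ s, κ * ‖v i‖ ^ 2 ≤ V) :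
    ‖(s.card : ℝ)⁻¹ • ∑ i ∈ s, v i‖ ^ 2 ≤ V / (s.card * κ) := by
  have hcard : (0 : ℝ) < s.card := by exact_mod_cast hs.card_pos
  rw [← Finset.mul_sum] at hsum
  calc ‖(s.card : ℝ)⁻¹ • ∑ i ∈ s, v i‖ ^ 2 ≤ (s.card : ℝ)⁻¹ * ∑ i ∈ s, ‖v i‖ ^ 2 :=
        sq_norm_inv_card_smul_sum_le s v
    _ = (κ * ∑ i ∈ s, ‖v i‖ ^ 2) / (s.card * κ) := by field_simp
    _ ≤ V / (s.card * κ) := by gcongr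

lemma map_inv_card_smul_sum_add_sub {X Z F G : Type*} [AddCommGroup X] [Module ℝ X]
    [AddCommGroup Z] [Module ℝ Z] [FunLike F X Z] [LinearMapClass F ℝ X Z]
    [FunLike G E Z] [LinearMapClass G ℝ E Z] {ι : Type*} {s : Finset ι} (hs : s.Nonempty)
    (A : F) (B : G) (c : Z) (x : ι → X) (y : ι → E) :
    A ((s.card : ℝ)⁻¹ • ∑ i ∈ s, x i) + B ((s.card : ℝ)⁻¹ • ∑ i ∈ s, y i) - c
      = (s.card : ℝ)⁻¹ • ∑ i ∈ s, (A (x i) + B (y i) - c) := by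
  have hcard : (s.card : ℝ) ≠ 0 := by exact_mod_cast hs.card_pos.ne'
  rw [map_smul, map_smul, map_sum, map_sum, Finset.sum_sub_distrib, Finset.sum_add_distrib,
    Finset.sum_const, smul_sub, smul_add, ← Nat.cast_smul_eq_nsmul ℝ, smul_smul,
    inv_mul_cancel₀ hcard, one_smul]

lemma neg_div_sqrt_mul_sqrt_le_inner {M V : ℝ} (hM : 0 ≤ M) {w r : E}
    (hr : ‖r‖ ^ 2 ≤ V / M) : -(‖w‖ / √M * √V) ≤ ⟪w, r⟫ :=
  calc -(‖w‖ / √M * √V) = -(‖w‖ * √(V / M)) := by rw [Real.sqrt_div' V hM]; ring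
    _ ≤ -(‖w‖ * ‖r‖) := by
        gcongr
        simpa using Real.abs_le_sqrt hr
    _ ≤ ⟪w, r⟫ := (abs_le.1 (abs_real_inner_le_norm w r)).1

end Averages

lemma add_coe_inner_le_of_isSubgradAt {X Y Z : Type*}
    [NormedAddCommGroup X] [InnerProductSpace ℝ X] [CompleteSpace X]
    [NormedAddCommGroup Y] [InnerProductSpace ℝ Y] [CompleteSpace Y]
    [NormedAddCommGroup Z] [InnerProductSpace ℝ Z] [CompleteSpace Z]
    {f : X → EReal} {g : Y → EReal} {A : X →L[ℝ] Z} {B : Y →L[ℝ] Z} {c : Z}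
    {xb : X} {yb : Y} {zb : Z} (hf : IsSubgradAt f (A.adjoint zb) xb)
    (hg : IsSubgradAt g (B.adjoint zb) yb) (hc : A xb + B yb - c = 0) (x : X) (y : Y) :
    f xb + g yb + ((⟪zb, A x + B y - c⟫ : ℝ) : EReal) ≤ f x + g y := by
  have hsplit : ⟪A.adjoint zb, x - xb⟫ + ⟪B.adjoint zb, y - yb⟫ = ⟪zb, A x + B y - c⟫ := by
    rw [ContinuousLinearMap.adjoint_inner_left, ContinuousLinearMap.adjoint_inner_left,
      ← inner_add_right, ← sub_zero (A x + B y - c), ← hc, map_sub, map_sub]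
    congr 1
    abel
  rw [← hsplit, EReal.coe_add, add_add_add_comm]
  exact add_le_add (hf x) (hg y)

theorem stmt_5_general
    {X Y Z : Type*}
    [NormedAddCommGroup X] [InnerProductSpace ℝ X] [FiniteDimensional ℝ X]
    [NormedAddCommGroup Y] [InnerProductSpace ℝ Y] [FiniteDimensional ℝ Y]
    [NormedAddCommGroup Z] [InnerProductSpace ℝ Z] [FiniteDimensional ℝ Z]
    (f : X → EReal) (g : Y → EReal)
    -- `f` and `g` are proper
    (hg_ne_bot : ∀ y, g y ≠ ⊥)
    -- `f` and `g` are convex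
    (hg_cvx : ∀ (y₁ y₂ : Y) (a b : ℝ), 0 ≤ a → 0 ≤ b → a + b = 1 →
      g (a • y₁ + b • y₂) ≤ (a : EReal) * g y₁ + (b : EReal) * g y₂)
    (A : X →L[ℝ] Z) (B : Y →L[ℝ] Z) (c : Z)
    (Sf : X →L[ℝ] X) (Sg : Y →L[ℝ] Y) (T : Y →L[ℝ] Y)
    -- `Sf ≻ 0`, `Sg ⪰ 0`, `T ⪰ 0` are self-adjoint
    (hT_sa : ∀ u v : Y, ⟪T u, v⟫ = ⟪u, T v⟫)
    (hSg_psd : ∀ y : Y, 0 ≤ ⟪y, Sg y⟫)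
    (hT_psd : ∀ y : Y, 0 ≤ ⟪y, T y⟫)
    -- the subdifferential monotonicity conditions on `f` and `g`
    (hf_mono : ∀ (x₁ x₂ u₁ u₂ : X), IsSubgradAt f u₁ x₁ → IsSubgradAt f u₂ x₂ →
      ⟪x₁ - x₂, Sf (x₁ - x₂)⟫ ≤ ⟪u₁ - u₂, x₁ - x₂⟫)
    (hg_mono : ∀ (y₁ y₂ v₁ v₂ : Y), IsSubgradAt g v₁ y₁ → IsSubgradAt g v₂ y₂ →
      ⟪y₁ - y₂, Sg (y₁ - y₂)⟫ ≤ ⟪v₁ - v₂, y₁ - y₂⟫)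
    (β γ : ℝ) (hβ : 0 < β) (hγ : 0 < γ)
    (x : ℕ → X) (y : ℕ → Y) (z : ℕ → Z)
    -- the proximal AMA iterations
    (hx : ∀ (t : ℕ) (x' : X),
      f (x (t+1)) + ((-⟪z t, A (x (t+1))⟫ : ℝ) : EReal)
        ≤ f x' + ((-⟪z t, A x'⟫ : ℝ) : EReal))
    (hy : ∀ (t : ℕ) (y' : Y),
      g (y (t+1)) + ((-⟪z t, B (y (t+1))⟫ + β / 2 * ‖A (x (t+1)) + B (y (t+1)) - c‖ ^ 2
          + 1 / 2 * ⟪y (t+1) - y t, T (y (t+1) - y t)⟫ : ℝ) : EReal)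
        ≤ g y' + ((-⟪z t, B y'⟫ + β / 2 * ‖A (x (t+1)) + B y' - c‖ ^ 2
          + 1 / 2 * ⟪y' - y t, T (y' - y t)⟫ : ℝ) : EReal))
    (hz : ∀ t : ℕ, z (t+1) = z t - (γ * β) • (A (x (t+1)) + B (y (t+1)) - c))
    (μ δ σ : ℝ) (hμ : 0 < μ) (hδ : 0 < δ) (hσ : 0 < σ)
    -- condition (ii): `2Σf − (β+μ)A*A ⪰ δI` and `γ + σ ≤ 1 + min{β,μ}/(2β)`
    (hcond2 : ∀ w : X, δ * ‖w‖ ^ 2 ≤ 2 * ⟪w, Sf w⟫ - (β + μ) * ‖A w‖ ^ 2)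
    (hcond3 : γ + σ ≤ 1 + min β μ / (2 * β))
    (xb : X) (yb : Y) (zb : Z)
    (hA1f : IsSubgradAt f (ContinuousLinearMap.adjoint A zb) xb)
    (hA1g : IsSubgradAt g (ContinuousLinearMap.adjoint B zb) yb)
    (hA1c : A xb + B yb - c = 0) :
    ∀ N : ℕ, 1 ≤ N →
      f xb + g yb
        ≤ f ((N : ℝ)⁻¹ • ∑ t ∈ Finset.Icc 1 N, x t)
            + g ((N : ℝ)⁻¹ • ∑ t ∈ Finset.Icc 1 N, y t)
          + ((‖zb‖ / Real.sqrt (N * σ * β) *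
              Real.sqrt (1 / (γ * β) * ‖z 0 - zb‖ ^ 2
                + ⟪y 0 - yb, T (y 0 - yb)⟫) : ℝ) : EReal) := by
  intro N hN
  have hT : T.IsPositive := ⟨hT_sa, fun w => by
    simpa [ContinuousLinearMap.reApplyInnerSelf, real_inner_comm] using hT_psd w⟩
  have hSf : ∀ w, (β + μ) * ‖A w‖ ^ 2 ≤ 2 * ⟪w, Sf w⟫ := fun w => by
    nlinarith [hcond2 w, mul_nonneg hδ.le (sq_nonneg ‖w‖)]
  have hfsub (t : ℕ) : IsSubgradAt f (A.adjoint (z t)) (x (t + 1)) :=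
    isSubgradAt_of_forall_add_neg_inner_le fun u => by
      simpa only [ContinuousLinearMap.adjoint_inner_left] using hx t u
  have hgsub (t : ℕ) : IsSubgradAt g (B.adjoint (z t)
      - β • B.adjoint (A (x (t + 1)) + B (y (t + 1)) - c) - T (y (t + 1) - y t)) (y (t + 1)) :=
    isSubgradAt_of_proxObjective_min hg_ne_bot hg_cvx hT.isSymmetric (hy t)
  set V := fun t => amaLyapunov T γ β zb yb (z t) (y t)
  have hdecr (t : ℕ) : σ * β * ‖A (x (t + 1)) + B (y (t + 1)) - c‖ ^ 2 ≤ V t - V (t + 1) :=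
    amaLyapunov_step hT hSg_psd hβ hγ hμ.le hSf hcond3 (hf_mono _ _ _ _ (hfsub t) hA1f)
      (hg_mono _ _ _ _ (hgsub t) hA1g) hA1c (hz t)
  have hsum := (sum_Icc_le_sub_of_le_sub_succ
    (a := fun t => σ * β * ‖A (x t) + B (y t) - c‖ ^ 2) hdecr N).trans
    (sub_le_self _ (amaLyapunov_nonneg hT hγ hβ _ _ _ _))
  have hcard : ((Finset.Icc 1 N).card : ℝ) = N := by simp
  have hres : ‖A ((N : ℝ)⁻¹ • ∑ t ∈ Finset.Icc 1 N, x t)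
      + B ((N : ℝ)⁻¹ • ∑ t ∈ Finset.Icc 1 N, y t) - c‖ ^ 2 ≤ V 0 / (N * σ * β) := by
    rw [← hcard, map_inv_card_smul_sum_add_sub (Finset.nonempty_Icc.2 hN), mul_assoc]
    exact sq_norm_inv_card_smul_sum_le_div (Finset.nonempty_Icc.2 hN) (by positivity) hsum
  exact EReal.le_add_coe_of_add_coe_le
    (add_coe_inner_le_of_isSubgradAt hA1f hA1g hA1c _ _)
    (neg_div_sqrt_mul_sqrt_le_inner (by positivity) hres)

/-- **Iteration complexity of the proximal AMA: lower objective bound (Theorem 3.2,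
lower bound in (fvalbd)).** For the ergodic averages
`(x̄^N, ȳ^N) = (1/N)Σ_{t=1}^N (x^t, y^t)` one has
`f(x̄^N) + g(ȳ^N) − f(x̄) − g(ȳ)
  ≥ −(‖z̄‖/√(Nσβ))·√((1/(γβ))‖z⁰ − z̄‖² + ‖y⁰ − ȳ‖²_T)`. -/
theorem stmt_5
    {X Y Z : Type*}
    [NormedAddCommGroup X] [InnerProductSpace ℝ X] [FiniteDimensional ℝ X]
    [NormedAddCommGroup Y] [InnerProductSpace ℝ Y] [FiniteDimensional ℝ Y]
    [NormedAddCommGroup Z] [InnerProductSpace ℝ Z] [FiniteDimensional ℝ Z]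
    (f : X → EReal) (g : Y → EReal)
    -- `f` and `g` are proper
    (hf_ne_bot : ∀ x, f x ≠ ⊥) (hf_proper : ∃ x, f x ≠ ⊤)
    (hg_ne_bot : ∀ y, g y ≠ ⊥) (hg_proper : ∃ y, g y ≠ ⊤)
    -- `f` and `g` are closed
    (hf_lsc : LowerSemicontinuous f) (hg_lsc : LowerSemicontinuous g)
    -- `f` and `g` are convex
    (hf_cvx : ∀ (x₁ x₂ : X) (a b : ℝ), 0 ≤ a → 0 ≤ b → a + b = 1 →
      f (a • x₁ + b • x₂) ≤ (a : EReal) * f x₁ + (b : EReal) * f x₂)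
    (hg_cvx : ∀ (y₁ y₂ : Y) (a b : ℝ), 0 ≤ a → 0 ≤ b → a + b = 1 →
      g (a • y₁ + b • y₂) ≤ (a : EReal) * g y₁ + (b : EReal) * g y₂)
    (A : X →L[ℝ] Z) (B : Y →L[ℝ] Z) (c : Z)
    (Sf : X →L[ℝ] X) (Sg : Y →L[ℝ] Y) (T : Y →L[ℝ] Y)
    -- `Sf ≻ 0`, `Sg ⪰ 0`, `T ⪰ 0` are self-adjoint
    (hSf_sa : ∀ u v : X, ⟪Sf u, v⟫ = ⟪u, Sf v⟫)
    (hSg_sa : ∀ u v : Y, ⟪Sg u, v⟫ = ⟪u, Sg v⟫)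
    (hT_sa : ∀ u v : Y, ⟪T u, v⟫ = ⟪u, T v⟫)
    (hSf_pd : ∀ x : X, x ≠ 0 → 0 < ⟪x, Sf x⟫)
    (hSg_psd : ∀ y : Y, 0 ≤ ⟪y, Sg y⟫)
    (hT_psd : ∀ y : Y, 0 ≤ ⟪y, T y⟫)
    -- the subdifferential monotonicity conditions on `f` and `g`
    (hf_mono : ∀ (x₁ x₂ u₁ u₂ : X), IsSubgradAt f u₁ x₁ → IsSubgradAt f u₂ x₂ →
      ⟪x₁ - x₂, Sf (x₁ - x₂)⟫ ≤ ⟪u₁ - u₂, x₁ - x₂⟫)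
    (hg_mono : ∀ (y₁ y₂ v₁ v₂ : Y), IsSubgradAt g v₁ y₁ → IsSubgradAt g v₂ y₂ →
      ⟪y₁ - y₂, Sg (y₁ - y₂)⟫ ≤ ⟪v₁ - v₂, y₁ - y₂⟫)
    (β γ : ℝ) (hβ : 0 < β) (hγ : 0 < γ)
    (x : ℕ → X) (y : ℕ → Y) (z : ℕ → Z)
    -- the proximal AMA iterations
    (hx : ∀ (t : ℕ) (x' : X),
      f (x (t+1)) + ((-⟪z t, A (x (t+1))⟫ : ℝ) : EReal)
        ≤ f x' + ((-⟪z t, A x'⟫ : ℝ) : EReal))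
    (hy : ∀ (t : ℕ) (y' : Y),
      g (y (t+1)) + ((-⟪z t, B (y (t+1))⟫ + β / 2 * ‖A (x (t+1)) + B (y (t+1)) - c‖ ^ 2
          + 1 / 2 * ⟪y (t+1) - y t, T (y (t+1) - y t)⟫ : ℝ) : EReal)
        ≤ g y' + ((-⟪z t, B y'⟫ + β / 2 * ‖A (x (t+1)) + B y' - c‖ ^ 2
          + 1 / 2 * ⟪y' - y t, T (y' - y t)⟫ : ℝ) : EReal))
    (hz : ∀ t : ℕ, z (t+1) = z t - (γ * β) • (A (x (t+1)) + B (y (t+1)) - c))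
    -- assumption A1
    (hA1 : ∃ (x1 : X) (y1 : Y) (z1 : Z),
      IsSubgradAt f (ContinuousLinearMap.adjoint A z1) x1 ∧
      IsSubgradAt g (ContinuousLinearMap.adjoint B z1) y1 ∧
      A x1 + B y1 - c = 0)
    -- condition (i): `Σg + T + βB*B ≻ 0`
    (hcond1 : ∀ w : Y, w ≠ 0 → 0 < ⟪w, Sg w⟫ + ⟪w, T w⟫ + β * ‖B w‖ ^ 2)
    (μ δ σ : ℝ) (hμ : 0 < μ) (hδ : 0 < δ) (hσ : 0 < σ)
    -- condition (ii): `2Σf − (β+μ)A*A ⪰ δI` and `γ + σ ≤ 1 + min{β,μ}/(2β)`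
    (hcond2 : ∀ w : X, δ * ‖w‖ ^ 2 ≤ 2 * ⟪w, Sf w⟫ - (β + μ) * ‖A w‖ ^ 2)
    (hcond3 : γ + σ ≤ 1 + min β μ / (2 * β))
    -- `(x̄, ȳ, z̄)` is the limit of the iterates guaranteed by the convergence theorem
    (xb : X) (yb : Y) (zb : Z)
    (hlimx : Tendsto x atTop (𝓝 xb)) (hlimy : Tendsto y atTop (𝓝 yb))
    (hlimz : Tendsto z atTop (𝓝 zb))
    (hA1f : IsSubgradAt f (ContinuousLinearMap.adjoint A zb) xb)
    (hA1g : IsSubgradAt g (ContinuousLinearMap.adjoint B zb) yb)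
    (hA1c : A xb + B yb - c = 0) :
    ∀ N : ℕ, 1 ≤ N →
      f xb + g yb
        ≤ f ((N : ℝ)⁻¹ • ∑ t ∈ Finset.Icc 1 N, x t)
            + g ((N : ℝ)⁻¹ • ∑ t ∈ Finset.Icc 1 N, y t)
          + ((‖zb‖ / Real.sqrt (N * σ * β) *
              Real.sqrt (1 / (γ * β) * ‖z 0 - zb‖ ^ 2
                + ⟪y 0 - yb, T (y 0 - yb)⟫) : ℝ) : EReal) :=
  stmt_5_general f g hg_ne_bot hg_cvx A B c Sf Sg T hT_sa hSg_psd hT_psd hf_mono hg_mono β γ hβ hγ x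
    y z hx hy hz μ δ σ hμ hδ hσ hcond2 hcond3 xb yb zb hA1f hA1g hA1c
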